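/- Let T be a d-minimal triangle with vertices p = (u/d, v/d), q = (w/d, x/d), r = (y/d, z/d), oriented counterclockwise with edges oriented p→q, q→r, r→p. If a, b, c are the weights of these three oriented edges, then a + b + c ≡ 1 (mod d). -/

import Mathlib

/-!
Translating `p` to the origin, the sum of the three weights is `D = det (q - p, r - p) > 0`, and
minimality says that the integer triangle `0, q - p, r - p` has no lattice points besides its
vertices. Then `q - p` is primitive, since otherwise `(q - p) / gcd` lies on the edge, so some
`w` has `det (q - p, w) = 1`; shifting `w` by multiples of `q - p` makes `0 ≤ det (w, r - p) < D`.
By Cramer's rule `D w = det (w, r - p) (q - p) + (r - p)`, so `w` lies in the triangle, and it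
can only be the vertex `r - p`, which forces `D = 1`.
-/

noncomputable section

/-- The lattice `(1/d)ℤ × (1/d)ℤ` inside `ℝ × ℝ`. -/
def Ld (d : ℕ) : Set (ℝ × ℝ) :=
  {p | ∃ a b : ℤ, p = ((a : ℝ) / d, (b : ℝ) / d)}

/-- A `d`-minimal triangle: vertices in `L_d`, not collinear, and the closed triangle
meets `L_d` exactly in its three vertices. -/
def IsMinimalTriangle (d : ℕ) (p q r : ℝ × ℝ) : Prop :=
  p ∈ Ld d ∧ q ∈ Ld d ∧ r ∈ Ld d ∧
    ¬ Collinear ℝ ({p, q, r} : Set (ℝ × ℝ)) ∧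
    convexHull ℝ ({p, q, r} : Set (ℝ × ℝ)) ∩ Ld d = {p, q, r}

/-- An element of `G = GL₂(ℤ) ⋉ ℤ²`: an integer matrix `[[a,b],[c,e]]` of determinant
`±1` together with an integer translation vector `(v1, v2)`. -/
structure GMap where
  a : ℤ
  b : ℤ
  c : ℤ
  e : ℤ
  v1 : ℤ
  v2 : ℤ
  unimod : a * e - b * c = 1 ∨ a * e - b * c = -1

/-- The affine action `x ↦ Ux + v` of a `GMap` on `ℝ²`. -/
def GMap.app (g : GMap) (p : ℝ × ℝ) : ℝ × ℝ :=
  ((g.a : ℝ) * p.1 + (g.b : ℝ) * p.2 + (g.v1 : ℝ),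
   (g.c : ℝ) * p.1 + (g.e : ℝ) * p.2 + (g.v2 : ℝ))

/-- A `d`-minimal segment: endpoints in `L_d`, distinct, and the closed segment meets
`L_d` exactly in its two endpoints. -/
def IsMinimalSegment (d : ℕ) (p q : ℝ × ℝ) : Prop :=
  p ∈ Ld d ∧ q ∈ Ld d ∧ p ≠ q ∧ segment ℝ p q ∩ Ld d = {p, q}

/-- The point of `L_d` with integer numerator data `p : ℤ × ℤ`. -/
def pt (d : ℕ) (p : ℤ × ℤ) : ℝ × ℝ := ((p.1 : ℝ) / d, (p.2 : ℝ) / d)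

/-- Counterclockwise orientation of the ordered triple of numerator data. -/
def ccwZ (p q r : ℤ × ℤ) : Prop :=
  0 < (q.1 - p.1) * (r.2 - p.2) - (q.2 - p.2) * (r.1 - p.1)

/-- Weight (mod `d`) of the oriented minimal segment from `(w/d, x/d)` to `(y/d, z/d)`,
given by numerator data `(w,x)` and `(y,z)`. -/
def segWeight (d : ℕ) (p q : ℤ × ℤ) : ZMod d :=
  ((p.1 * q.2 - p.2 * q.1 : ℤ) : ZMod d)

/-- The multiset of weights of the three edges `p→q`, `q→r`, `r→p` of a triangle
given by numerator data. -/
def triWeight (d : ℕ) (p q r : ℤ × ℤ) : Multiset (ZMod d) :=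
  {segWeight d p q, segWeight d q r, segWeight d r p}

theorem add_smul_sub_add_smul_sub_mem_convexHull {𝕜 E : Type*} [Field 𝕜] [LinearOrder 𝕜]
    [IsStrictOrderedRing 𝕜] [AddCommGroup E] [Module 𝕜 E] (p q r : E) {s t : 𝕜}
    (hs : 0 ≤ s) (ht : 0 ≤ t) (hst : s + t ≤ 1) :
    p + s • (q - p) + t • (r - p) ∈ convexHull 𝕜 {p, q, r} := by
  have h := (convex_convexHull 𝕜 ({p, q, r} : Set E)).sum_mem (t := Finset.univ)
    (w := ![1 - s - t, s, t]) (z := ![p, q, r]) ?_ ?_ ?_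
  · convert h using 1
    simp only [Fin.sum_univ_three, Matrix.cons_val_zero, Matrix.cons_val_one,
      Matrix.cons_val_two, Matrix.head_cons, Matrix.tail_cons]
    module
  · intro i _
    fin_cases i
    exacts [show 0 ≤ 1 - s - t by linarith, hs, ht]
  · simp only [Fin.sum_univ_three, Matrix.cons_val_zero, Matrix.cons_val_one,
      Matrix.cons_val_two, Matrix.head_cons, Matrix.tail_cons]
    ring
  · intro i _; exact subset_convexHull 𝕜 _ (by fin_cases i <;> simp)

/-- The determinant of the integer vectors `u` and `v`. -/
def det2 (u v : ℤ × ℤ) : ℤ := u.1 * v.2 - u.2 * v.1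

theorem det2_self (u : ℤ × ℤ) : det2 u u = 0 := by
  unfold det2; ring

theorem det2_smul_left (c : ℤ) (u v : ℤ × ℤ) : det2 (c • u) v = c * det2 u v := by
  simp only [det2, Prod.smul_fst, Prod.smul_snd, smul_eq_mul]; ring

theorem det2_smul_eq_add (a b v : ℤ × ℤ) :
    det2 a b • v = det2 v b • a + det2 a v • b := by
  ext <;> simp only [det2, Prod.smul_fst, Prod.smul_snd, Prod.fst_add, Prod.snd_add,
    smul_eq_mul] <;> ring

theorem det2_sub_sub (p q r : ℤ × ℤ) :
    det2 (q - p) (r - p) = det2 p q + det2 q r + det2 r p := by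
  simp only [det2, Prod.fst_sub, Prod.snd_sub]; ring

theorem exists_det2_eq_one {a b : ℤ × ℤ} (ha : IsCoprime a.1 a.2) (hab : 0 < det2 a b) :
    ∃ w : ℤ × ℤ, det2 a w = 1 ∧ 0 ≤ det2 w b ∧ det2 w b < det2 a b := by
  obtain ⟨u, v, huv⟩ := ha
  set w₀ : ℤ × ℤ := (-v, u)
  have hmod : det2 (w₀ - (det2 w₀ b / det2 a b) • a) b = det2 w₀ b % det2 a b := by
    rw [Int.emod_def]; simp only [det2, Prod.fst_sub, Prod.snd_sub, Prod.smul_fst,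
      Prod.smul_snd, smul_eq_mul]; ring
  refine ⟨w₀ - (det2 w₀ b / det2 a b) • a, ?_, ?_, ?_⟩
  · simp only [det2, Prod.fst_sub, Prod.snd_sub, Prod.smul_fst, Prod.smul_snd, smul_eq_mul, w₀]
    linear_combination huv
  · exact hmod ▸ Int.emod_nonneg _ hab.ne'
  · exact hmod ▸ Int.emod_lt_of_pos _ hab

theorem pt_injective {d : ℕ} (hd : 0 < d) : Function.Injective (pt d) := by
  intro x y h
  have hd' : (d : ℝ) ≠ 0 := by positivity
  simp only [pt, Prod.mk.injEq, div_left_inj' hd', Int.cast_inj] at h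
  exact Prod.ext h.1 h.2

theorem pt_add_eq_of_smul_eq (d : ℕ) {p q r v : ℤ × ℤ} {D α β : ℤ} (hD : D ≠ 0)
    (h : D • v = α • (q - p) + β • (r - p)) :
    pt d (p + v) =
      pt d p + ((α : ℝ) / D) • (pt d q - pt d p) + ((β : ℝ) / D) • (pt d r - pt d p) := by
  have hD' : (D : ℝ) ≠ 0 := by exact_mod_cast hD
  have key {n x y z : ℤ} (e : D * n = α * (y - x) + β * (z - x)) :
      ((x + n : ℤ) : ℝ) = x + α / D * (y - x) + β / D * (z - x) := by
    push_cast
    field_simp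
    have e' := congrArg (Int.cast : ℤ → ℝ) e
    push_cast at e'
    linear_combination e'
  obtain ⟨h1, h2⟩ := Prod.ext_iff.mp h
  simp only [Prod.smul_fst, Prod.smul_snd, Prod.fst_add, Prod.snd_add, Prod.fst_sub,
    Prod.snd_sub, smul_eq_mul] at h1 h2
  ext <;> simp only [pt, Prod.fst_add, Prod.snd_add, Prod.smul_fst, Prod.smul_snd,
    Prod.fst_sub, Prod.snd_sub, smul_eq_mul]
  · rw [key h1]; ring
  · rw [key h2]; ring

/-- No lattice point other than a vertex lies in the triangle `0, a, b`, tested on the points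
`(α • a + β • b) / D` with integral `α, β, D`. -/
def IsEmptyTriangle (a b : ℤ × ℤ) : Prop :=
  ∀ ⦃v : ℤ × ℤ⦄ ⦃D α β : ℤ⦄, 0 < D → 0 ≤ α → 0 ≤ β → α + β ≤ D →
    D • v = α • a + β • b → v = 0 ∨ v = a ∨ v = b

theorem IsMinimalTriangle.isEmptyTriangle {d : ℕ} (hd : 0 < d) {p q r : ℤ × ℤ}
    (hmin : IsMinimalTriangle d (pt d p) (pt d q) (pt d r)) :
    IsEmptyTriangle (q - p) (r - p) := by
  intro v D α β hD hα hβ hαβ h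
  have hD' : (0 : ℝ) < D := by exact_mod_cast hD
  have hmem : pt d (p + v) ∈ convexHull ℝ {pt d p, pt d q, pt d r} ∩ Ld d := by
    refine ⟨?_, (p + v).1, (p + v).2, rfl⟩
    rw [pt_add_eq_of_smul_eq d hD.ne' h]
    apply add_smul_sub_add_smul_sub_mem_convexHull <;> try positivity
    rw [← add_div, div_le_one hD']
    exact_mod_cast hαβ
  rw [hmin.2.2.2.2] at hmem
  simp only [Set.mem_insert_iff, Set.mem_singleton_iff, (pt_injective hd).eq_iff] at hmem
  rcases hmem with h | h | h
  · exact Or.inl (by simpa only [add_eq_left] using h)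
  · exact Or.inr (Or.inl (by rw [← h]; abel))
  · exact Or.inr (Or.inr (by rw [← h]; abel))

namespace IsEmptyTriangle

variable {a b : ℤ × ℤ}

theorem isCoprime (h : IsEmptyTriangle a b) (hdet : det2 a b ≠ 0) : IsCoprime a.1 a.2 := by
  have ha : a ≠ 0 := by rintro rfl; simp [det2] at hdet
  obtain ⟨g, hg⟩ : ∃ g : ℤ, g = a.1.gcd a.2 := ⟨_, rfl⟩
  obtain ⟨m, hm⟩ : ∃ m : ℤ × ℤ, a = g • m :=
    ⟨(a.1 / g, a.2 / g), by ext <;> simp [hg, Int.mul_ediv_cancel' (Int.gcd_dvd_left _ _),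
      Int.mul_ediv_cancel' (Int.gcd_dvd_right _ _)]⟩
  have hg0 : 0 < g := by
    rw [hg, Nat.cast_pos, Int.gcd_pos_iff]
    by_contra! h0; exact ha (Prod.ext h0.1 h0.2)
  suffices g = 1 by rw [Int.isCoprime_iff_gcd_eq_one]; omega
  rcases h hg0 zero_le_one le_rfl (by omega) (by rw [one_smul, zero_smul, add_zero, hm])
    with hm0 | hma | hmb
  · exact absurd (by rw [hm, hm0, smul_zero]) ha
  · rw [hma] at hm
    have : (g - 1) • a = 0 := by rw [sub_smul, one_smul, ← hm, sub_self]
    rcases smul_eq_zero.mp this with h1 | h1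
    · omega
    · exact absurd h1 ha
  · exact absurd (by rw [hm, hmb, det2_smul_left, det2_self, mul_zero]) hdet

theorem det2_eq_one (h : IsEmptyTriangle a b) (hdet : 0 < det2 a b) : det2 a b = 1 := by
  obtain ⟨w, hw, hwb₀, hwb⟩ := exists_det2_eq_one (h.isCoprime hdet.ne') hdet
  rcases h hdet hwb₀ zero_le_one (by omega) (by rw [det2_smul_eq_add, hw]) with rfl | rfl | rfl
  · simp [det2] at hw
  · simp [det2_self] at hw
  · exact hw

end IsEmptyTriangle

/-- the three counterclockwise edge weights of a `d`-minimal triangle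
sum to `1` mod `d`. -/
theorem triangle_weights_sum_to_one (d : ℕ) (hd : 0 < d) (p q r : ℤ × ℤ)
    (hmin : IsMinimalTriangle d (pt d p) (pt d q) (pt d r))
    (hccw : ccwZ p q r) :
    segWeight d p q + segWeight d q r + segWeight d r p = 1 := by
  have hdet : det2 (q - p) (r - p) = 1 := (hmin.isEmptyTriangle hd).det2_eq_one hccw
  calc segWeight d p q + segWeight d q r + segWeight d r p
      = ((det2 p q + det2 q r + det2 r p : ℤ) : ZMod d) := by
        simp only [segWeight, det2, Int.cast_add]
    _ = 1 := by rw [← det2_sub_sub, hdet, Int.cast_one]
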